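/- Let α₁, α₂, α₃ be 2-forms on a finite-dimensional real inner product space, with associated skew-symmetric endomorphisms A₁, A₂, A₃. Then L*_{α₁}(α₂ ∧ α₃) = ⟨α₁,α₂⟩α₃ + ⟨α₁,α₃⟩α₂ + g((A₃A₁A₂ + A₂A₁A₃)·,·), where L*_{α₁} is the adjoint of exterior multiplication by α₁. -/

import Mathlib

/-!
Evaluate both sides on `(u, v)`. By definition of `L*`, the left side is
`½ Σᵢⱼ α₁(eᵢ,eⱼ) (α₂ ∧ α₃)(eᵢ,eⱼ,u,v)`, and the wedge of two 2-forms on four vectors is a sum of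
six products. The two products `α₂(eᵢ,eⱼ)α₃(u,v)` and `α₃(eᵢ,eⱼ)α₂(u,v)` produce the inner
products `⟨α₁,α₂⟩α₃ + ⟨α₁,α₃⟩α₂`. Each of the four mixed products contributes a contraction
`Σᵢⱼ g(A₁eᵢ,eⱼ) g(Beᵢ,x) g(Ceⱼ,y)`, and Parseval's identity together with skew-symmetry evaluates
it to `-g(CA₁Bx, y)`. These four terms give the two triple products.
-/

noncomputable section
open scoped BigOperators RealInnerProductSpace

variable {V : Type*} [NormedAddCommGroup V] [InnerProductSpace ℝ V]

/-- Wedge product of alternating maps. -/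
def wedgeAM {p q : ℕ} (α : AlternatingMap ℝ V ℝ (Fin p)) (β : AlternatingMap ℝ V ℝ (Fin q)) :
    AlternatingMap ℝ V ℝ (Fin (p + q)) :=
  AlternatingMap.domDomCongr finSumFinEquiv
    ((TensorProduct.lid ℝ ℝ).toLinearMap.compAlternatingMap (α.domCoprod β))

/-- `L*_{α₁}φ = ½ Σ_{i,j} α₁(eᵢ,eⱼ) eⱼ⌟eᵢ⌟φ`. -/
def Lstar2 {N m : ℕ} (b : OrthonormalBasis (Fin N) ℝ V)
    (α₁ : AlternatingMap ℝ V ℝ (Fin 2)) (φ : AlternatingMap ℝ V ℝ (Fin (m + 2))) :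
    AlternatingMap ℝ V ℝ (Fin m) :=
  (2 : ℝ)⁻¹ • ∑ i, ∑ j, α₁ ![b i, b j] • ((φ.curryLeft (b i)).curryLeft (b j))

/-- Inner product on 2-forms: `⟨α,β⟩ = ½ Σ_{i,j} α(eᵢ,eⱼ)β(eᵢ,eⱼ)`. -/
def inner2 {N : ℕ} (b : OrthonormalBasis (Fin N) ℝ V)
    (α β : AlternatingMap ℝ V ℝ (Fin 2)) : ℝ :=
  (2 : ℝ)⁻¹ * ∑ i, ∑ j, α ![b i, b j] * β ![b i, b j]


open Equiv

theorem Equiv.Perm.sum_fin_succ {M : Type*} [AddCommMonoid M] {n : ℕ}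
    (f : Perm (Fin (n + 1)) → M) :
    ∑ σ, f σ = ∑ p, ∑ τ : Perm (Fin n), f (Perm.decomposeFin.symm (p, τ)) := by
  rw [Finset.univ_perm_fin_succ, Finset.sum_map, Fintype.sum_prod_type]
  rfl

namespace AlternatingMap

theorem sum_apply {R M N ι κ : Type*} [Semiring R] [AddCommMonoid M] [Module R M]
    [AddCommMonoid N] [Module R N] (s : Finset κ) (f : κ → M [⋀^ι]→ₗ[R] N) (v : ι → M) :
    (∑ k ∈ s, f k) v = ∑ k ∈ s, f k v := by
  induction s using Finset.cons_induction with
  | empty => simp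
  | cons k s _ ih => simp [Finset.sum_cons, ih]

theorem map_fin_two_swap {R M N : Type*} [Semiring R] [AddCommMonoid M] [Module R M]
    [AddCommGroup N] [Module R N] (α : M [⋀^Fin 2]→ₗ[R] N) (x y : M) :
    α ![y, x] = -α ![x, y] := by
  convert α.map_swap ![x, y] (i := 0) (j := 1) (by decide) using 2
  ext i; fin_cases i <;> rfl

theorem lid_domCoprod_apply_mul_factorial {R M ιa ιb : Type*} [CommRing R]
    [AddCommGroup M] [Module R M] [Fintype ιa] [Fintype ιb] [DecidableEq ιa] [DecidableEq ιb]
    (a : M [⋀^ιa]→ₗ[R] R) (b : M [⋀^ιb]→ₗ[R] R) (w : ιa ⊕ ιb → M) :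
    ((Fintype.card ιa).factorial * (Fintype.card ιb).factorial : R) *
        TensorProduct.lid R R (a.domCoprod b w)
      = ∑ σ : Perm (ιa ⊕ ιb),
          ((Perm.sign σ : ℤ) : R) * (a (fun i => w (σ (.inl i))) * b (fun i => w (σ (.inr i)))) := by
  have h := congrArg (fun f => TensorProduct.lid R R (f w))
    (MultilinearMap.domCoprod_alternization_eq a b)
  simp only [MultilinearMap.alternatization_apply, map_sum, smul_apply, map_nsmul] at h
  rw [← Nat.cast_mul, ← nsmul_eq_mul, ← h]
  refine Finset.sum_congr rfl fun σ _ => ?_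
  rw [Units.smul_def, map_zsmul, zsmul_eq_mul]
  simp

end AlternatingMap

theorem wedgeAM_apply_mul_factorial {p q : ℕ} (α : AlternatingMap ℝ V ℝ (Fin p))
    (β : AlternatingMap ℝ V ℝ (Fin q)) (v : Fin (p + q) → V) :
    (p.factorial * q.factorial : ℝ) * wedgeAM α β v
      = ∑ σ : Perm (Fin (p + q)), (Perm.sign σ : ℝ) *
          (α (fun i => v (σ (Fin.castAdd q i))) * β (fun i => v (σ (Fin.natAdd p i)))) := by
  have h := AlternatingMap.lid_domCoprod_apply_mul_factorial α β (v ∘ finSumFinEquiv)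
  simp only [Fintype.card_fin] at h
  rw [wedgeAM, AlternatingMap.domDomCongr_apply]
  refine h.trans (Fintype.sum_equiv finSumFinEquiv.permCongr _ _ fun σ => ?_)
  simp [Perm.sign_permCongr, Equiv.permCongr_apply]

theorem wedgeAM_apply_fin_four (α β : AlternatingMap ℝ V ℝ (Fin 2)) (a b c d : V) :
    wedgeAM α β ![a, b, c, d]
      = α ![a, b] * β ![c, d] - α ![a, c] * β ![b, d] + α ![a, d] * β ![b, c]
        + α ![b, c] * β ![a, d] - α ![b, d] * β ![a, c] + α ![c, d] * β ![a, b] := by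
  set x : Fin 4 → V := ![a, b, c, d]
  have h := wedgeAM_apply_mul_factorial α β x
  have hl (σ : Perm (Fin 4)) : (fun i => x (σ (Fin.castAdd 2 i))) = ![x (σ 0), x (σ 1)] := by
    ext i; fin_cases i <;> rfl
  have hr (σ : Perm (Fin 4)) : (fun i => x (σ (Fin.natAdd 2 i))) = ![x (σ 2), x (σ 3)] := by
    ext i; fin_cases i <;> rfl
  have hd : (default : Perm (Fin 1)) = 1 := Subsingleton.elim _ _
  -- `decomposeFin.symm` only computes on `0` and on `Fin.succ _`, so numerals are unfolded first.
  have e41 : (1 : Fin 4) = Fin.succ 0 := rfl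
  have e42 : (2 : Fin 4) = Fin.succ 1 := rfl
  have e43 : (3 : Fin 4) = Fin.succ 2 := rfl
  have e31 : (1 : Fin 3) = Fin.succ 0 := rfl
  have e32 : (2 : Fin 3) = Fin.succ 1 := rfl
  have e21 : (1 : Fin 2) = Fin.succ 0 := rfl
  simp only [hl, hr, hd, Perm.sum_fin_succ (n := 3), Perm.sum_fin_succ (n := 2),
    Perm.sum_fin_succ (n := 1), Fintype.sum_unique, Fin.sum_univ_succ, e41, e42, e43, e31, e32,
    e21, Perm.decomposeFin_symm_apply_zero, Perm.decomposeFin_symm_apply_succ,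
    Perm.decomposeFin.symm_sign, Perm.one_apply, Perm.sign_one] at h
  simp +decide only [swap_apply_def, if_true, if_false] at h
  simp only [x, Matrix.cons_val_zero, Matrix.cons_val_succ, Matrix.cons_val_fin_one,
    α.map_fin_two_swap a b, α.map_fin_two_swap a c, α.map_fin_two_swap a d,
    α.map_fin_two_swap b c, α.map_fin_two_swap b d, α.map_fin_two_swap c d,
    β.map_fin_two_swap a b, β.map_fin_two_swap a c, β.map_fin_two_swap a d,
    β.map_fin_two_swap b c, β.map_fin_two_swap b d, β.map_fin_two_swap c d] at h
  norm_num [Nat.factorial] at h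
  linear_combination h / 4

theorem Lstar2_apply {N m : ℕ} (b : OrthonormalBasis (Fin N) ℝ V)
    (α₁ : AlternatingMap ℝ V ℝ (Fin 2)) (φ : AlternatingMap ℝ V ℝ (Fin (m + 2)))
    (v : Fin m → V) :
    Lstar2 b α₁ φ v
      = 2⁻¹ * ∑ i, ∑ j, α₁ ![b i, b j] * φ (Matrix.vecCons (b i) (Matrix.vecCons (b j) v)) := by
  simp only [Lstar2, AlternatingMap.smul_apply, AlternatingMap.sum_apply,
    AlternatingMap.curryLeft_apply_apply, smul_eq_mul]

namespace LinearMap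

def IsSkewSymmetric (A : V →ₗ[ℝ] V) : Prop :=
  ∀ u v, ⟪A u, v⟫ = -⟪u, A v⟫

theorem IsSkewSymmetric.inner_map_map_map {P Q R : V →ₗ[ℝ] V} (hP : P.IsSkewSymmetric)
    (hQ : Q.IsSkewSymmetric) (hR : R.IsSkewSymmetric) (x y : V) :
    ⟪P (Q (R x)), y⟫ = -⟪R (Q (P y)), x⟫ := by
  rw [hP, hQ, hR, real_inner_comm x, neg_neg]

end LinearMap

namespace OrthonormalBasis

variable {ι : Type*} [Fintype ι] (b : OrthonormalBasis ι ℝ V) {A B C : V →ₗ[ℝ] V}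

theorem sum_inner_mul_inner_map_of_isSkewSymmetric (hC : C.IsSkewSymmetric) (x y : V) :
    ∑ j, ⟪x, b j⟫ * ⟪C (b j), y⟫ = -⟪x, C y⟫ := by
  simp_rw [hC _ y, mul_neg, Finset.sum_neg_distrib, b.sum_inner_mul_inner]

theorem sum_sum_inner_map_mul_inner_map_mul_inner_map (hA : A.IsSkewSymmetric)
    (hB : B.IsSkewSymmetric) (hC : C.IsSkewSymmetric) (x y : V) :
    ∑ i, ∑ j, ⟪A (b i), b j⟫ * (⟪B (b i), x⟫ * ⟪C (b j), y⟫) = -⟪C (A (B x)), y⟫ :=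
  calc ∑ i, ∑ j, ⟪A (b i), b j⟫ * (⟪B (b i), x⟫ * ⟪C (b j), y⟫)
      = ∑ i, ⟪B (b i), x⟫ * -⟪A (b i), C y⟫ := Finset.sum_congr rfl fun i _ => by
        rw [← b.sum_inner_mul_inner_map_of_isSkewSymmetric hC, Finset.mul_sum]
        exact Finset.sum_congr rfl fun j _ => by ring
    _ = ∑ i, ⟪A (C y), b i⟫ * ⟪B (b i), x⟫ := Finset.sum_congr rfl fun i _ => by
        rw [hA, neg_neg, real_inner_comm (A (C y)), mul_comm]
    _ = -⟪C (A (B x)), y⟫ := by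
        rw [b.sum_inner_mul_inner_map_of_isSkewSymmetric hB, hA, hC, neg_neg, real_inner_comm]

end OrthonormalBasis

theorem Lstar2_wedge_general {N : ℕ}
    (b : OrthonormalBasis (Fin N) ℝ V)
    (α₁ α₂ α₃ : AlternatingMap ℝ V ℝ (Fin 2))
    (A₁ A₂ A₃ : V →ₗ[ℝ] V)
    (h₁ : ∀ u v : V, α₁ ![u, v] = ⟪A₁ u, v⟫)
    (h₂ : ∀ u v : V, α₂ ![u, v] = ⟪A₂ u, v⟫)
    (h₃ : ∀ u v : V, α₃ ![u, v] = ⟪A₃ u, v⟫)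
    (hs₁ : ∀ u v : V, ⟪A₁ u, v⟫ = -⟪u, A₁ v⟫)
    (hs₂ : ∀ u v : V, ⟪A₂ u, v⟫ = -⟪u, A₂ v⟫)
    (hs₃ : ∀ u v : V, ⟪A₃ u, v⟫ = -⟪u, A₃ v⟫) :
    ∀ u v : V,
      Lstar2 b α₁ (wedgeAM α₂ α₃) ![u, v]
        = inner2 b α₁ α₂ * α₃ ![u, v] + inner2 b α₁ α₃ * α₂ ![u, v]
          + ⟪A₃ (A₁ (A₂ u)) + A₂ (A₁ (A₃ u)), v⟫ := by
  intro u v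
  have hsummand : ∀ i j, α₁ ![b i, b j] * wedgeAM α₂ α₃ ![b i, b j, u, v]
      = α₁ ![b i, b j] * α₂ ![b i, b j] * α₃ ![u, v]
        + α₁ ![b i, b j] * α₃ ![b i, b j] * α₂ ![u, v]
        - ⟪A₁ (b i), b j⟫ * (⟪A₂ (b i), u⟫ * ⟪A₃ (b j), v⟫)
        + ⟪A₁ (b i), b j⟫ * (⟪A₂ (b i), v⟫ * ⟪A₃ (b j), u⟫)
        + ⟪A₁ (b i), b j⟫ * (⟪A₃ (b i), v⟫ * ⟪A₂ (b j), u⟫)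
        - ⟪A₁ (b i), b j⟫ * (⟪A₃ (b i), u⟫ * ⟪A₂ (b j), v⟫) := fun i j => by
    rw [wedgeAM_apply_fin_four]
    simp only [h₁, h₂, h₃]
    ring
  rw [Lstar2_apply]
  simp only [hsummand, Finset.sum_add_distrib, Finset.sum_sub_distrib, ← Finset.sum_mul]
  rw [b.sum_sum_inner_map_mul_inner_map_mul_inner_map hs₁ hs₂ hs₃ u v,
    b.sum_sum_inner_map_mul_inner_map_mul_inner_map hs₁ hs₂ hs₃ v u,
    b.sum_sum_inner_map_mul_inner_map_mul_inner_map hs₁ hs₃ hs₂ v u,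
    b.sum_sum_inner_map_mul_inner_map_mul_inner_map hs₁ hs₃ hs₂ u v,
    LinearMap.IsSkewSymmetric.inner_map_map_map hs₃ hs₁ hs₂ v,
    LinearMap.IsSkewSymmetric.inner_map_map_map hs₂ hs₁ hs₃ v, inner2, inner2, inner_add_left]
  ring

theorem Lstar2_wedge {N : ℕ} [FiniteDimensional ℝ V]
    (b : OrthonormalBasis (Fin N) ℝ V)
    (α₁ α₂ α₃ : AlternatingMap ℝ V ℝ (Fin 2))
    (A₁ A₂ A₃ : V →ₗ[ℝ] V)
    (h₁ : ∀ u v : V, α₁ ![u, v] = ⟪A₁ u, v⟫)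
    (h₂ : ∀ u v : V, α₂ ![u, v] = ⟪A₂ u, v⟫)
    (h₃ : ∀ u v : V, α₃ ![u, v] = ⟪A₃ u, v⟫)
    (hs₁ : ∀ u v : V, ⟪A₁ u, v⟫ = -⟪u, A₁ v⟫)
    (hs₂ : ∀ u v : V, ⟪A₂ u, v⟫ = -⟪u, A₂ v⟫)
    (hs₃ : ∀ u v : V, ⟪A₃ u, v⟫ = -⟪u, A₃ v⟫) :
    ∀ u v : V,
      Lstar2 b α₁ (wedgeAM α₂ α₃) ![u, v]
        = inner2 b α₁ α₂ * α₃ ![u, v] + inner2 b α₁ α₃ * α₂ ![u, v]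
          + ⟪A₃ (A₁ (A₂ u)) + A₂ (A₁ (A₃ u)), v⟫ :=
  Lstar2_wedge_general b α₁ α₂ α₃ A₁ A₂ A₃ h₁ h₂ h₃ hs₁ hs₂ hs₃
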